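/- Let R be a commutative ring. The functor 𝖳 : R-mod → Fun(Γ₊,R), defined by 𝖳(M)(S) = ⊕_{s ∈ S∖{o}} M, is exact and fully faithful. -/

import Mathlib

/-!
Evaluated at `S`, the functor `𝖳` is `M ↦ ⊕_{S ∖ {o}} M`, a finite direct sum of copies of the
identity, hence its own left and right adjoint; so it preserves all limits and colimits, and
these are computed pointwise in `Fun(Γ₊, R)`. A natural transformation `𝖳 M ⟶ 𝖳 N` is
determined by its component at `[1]₊`: the summand of `𝖳 M (S)` indexed by `s` is the image of
`𝖳 M ([1]₊) = M` under the pointed map `[1]₊ ⟶ S` hitting `s`.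
-/

open CategoryTheory Limits

/-- `Γ₊`: the category of finite pointed sets. -/
abbrev GammaPlus : Type 1 := CategoryTheory.ObjectProperty.FullSubcategory (fun X : Pointed => Finite X.X)

/-- `[n]₊ ∈ Γ₊`: the pointed set with `n` non-basepoint elements and basepoint `o = none`. -/
def GammaPlus.of (n : ℕ) : GammaPlus := ⟨⟨Option (Fin n), none⟩, inferInstance⟩

/-- The set of non-basepoint elements of a finite pointed set. -/
def GammaPlus.nb (S : GammaPlus) : Type := {s : S.obj.X // s ≠ S.obj.point}

variable (R : Type) [CommRing R]

open Classical in
/-- The linear map underlying the action of `𝖳(M)` on a pointed map `f : S ⟶ S'`: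
the summand indexed by `s` is sent (identically) to the summand indexed by `f(s)`,
and to zero if `f(s) = o`. -/
noncomputable def spanTMapAux (M : ModuleCat R) {S S' : GammaPlus} (f : S ⟶ S') :
    (GammaPlus.nb S →₀ M) →ₗ[R] (GammaPlus.nb S' →₀ M) :=
  Finsupp.lsum R fun s =>
    if h : f.hom.toFun s.1 ≠ S'.obj.point then Finsupp.lsingle (⟨f.hom.toFun s.1, h⟩ : GammaPlus.nb S')
    else 0

open Classical in
lemma spanTMapAux_single (M : ModuleCat R) {S S' : GammaPlus} (f : S ⟶ S') (s : GammaPlus.nb S)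
    (m : M) :
    spanTMapAux R M f (Finsupp.single s m) =
      if h : f.hom.toFun s.1 ≠ S'.obj.point then Finsupp.single (⟨f.hom.toFun s.1, h⟩ : GammaPlus.nb S') m
      else 0 := by
  unfold spanTMapAux
  rw [Finsupp.lsum_single]
  split_ifs with h <;> rfl

lemma spanTMapAux_id (M : ModuleCat R) (S : GammaPlus) :
    spanTMapAux R M (𝟙 S) = LinearMap.id := by
  apply Finsupp.lhom_ext
  intro s m
  rw [spanTMapAux_single, LinearMap.id_apply]
  split_ifs with h
  · rfl
  · exact absurd s.2 h

lemma spanTMapAux_comp (M : ModuleCat R) {S S' S'' : GammaPlus} (f : S ⟶ S') (g : S' ⟶ S'') :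
    spanTMapAux R M (f ≫ g) = (spanTMapAux R M g).comp (spanTMapAux R M f) := by
  apply Finsupp.lhom_ext
  intro s m
  rw [LinearMap.comp_apply, spanTMapAux_single, spanTMapAux_single]
  by_cases h1 : f.hom.toFun s.1 ≠ S'.obj.point
  · rw [dif_pos h1]; erw [spanTMapAux_single]
    split_ifs with hA hB hB
    · rfl
    · exact absurd hA hB
    · exact absurd hB hA
    · rfl
  · rw [dif_neg h1]; erw [map_zero]
    have hg : g.hom.toFun (f.hom.toFun s.1) = S''.obj.point := by
      rw [not_not.mp h1]; exact g.hom.map_point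
    split_ifs with hA
    · exact absurd hg hA
    · rfl

lemma spanTMapAux_natural {M N : ModuleCat R} (φ : M ⟶ N) {S S' : GammaPlus} (f : S ⟶ S') :
    (Finsupp.mapRange.linearMap (α := GammaPlus.nb S') φ.hom).comp (spanTMapAux R M f)
      = (spanTMapAux R N f).comp (Finsupp.mapRange.linearMap φ.hom) := by
  apply Finsupp.lhom_ext
  intro s m
  rw [LinearMap.comp_apply, LinearMap.comp_apply, spanTMapAux_single]
  erw [Finsupp.mapRange.linearMap_apply, Finsupp.mapRange.linearMap_apply,
    Finsupp.mapRange_single, spanTMapAux_single]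
  by_cases h : f.hom.toFun s.1 ≠ S'.obj.point
  · rw [dif_pos h, dif_pos h]; erw [Finsupp.mapRange_single]; rfl
  · rw [dif_neg h, dif_neg h]; erw [Finsupp.mapRange_zero]; rfl

/-- The functor `𝖳 : R-mod ⥤ Fun(Γ₊, R)`, with `𝖳(M)(S) = ⊕_{s ∈ S∖{o}} M`;
a pointed map `f` sends the summand indexed by `s` identically to the summand indexed
by `f(s)`, and to zero if `f(s) = o`. -/
noncomputable def spanT : ModuleCat R ⥤ (GammaPlus ⥤ ModuleCat R) where
  obj M :=
    { obj := fun S => ModuleCat.of R (GammaPlus.nb S →₀ M)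
      map := fun f => ModuleCat.ofHom (spanTMapAux R M f)
      map_id := fun S => ModuleCat.hom_ext (spanTMapAux_id R M S)
      map_comp := fun f g => ModuleCat.hom_ext (spanTMapAux_comp R M f g) }
  map {M N} φ :=
    { app := fun S => ModuleCat.ofHom (Finsupp.mapRange.linearMap φ.hom)
      naturality := fun {S S'} f => ModuleCat.hom_ext (spanTMapAux_natural R φ f) }
  map_id M := by
    ext S : 2
    exact ModuleCat.hom_ext Finsupp.mapRange.linearMap_id
  map_comp φ ψ := by
    ext S : 2
    exact ModuleCat.hom_ext (Finsupp.mapRange.linearMap_comp _ _)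

/-- The reduced span functor `T ∈ Fun(Γ₊, R)`, `T(S) = ⊕_{s ∈ S∖{o}} R`. -/
noncomputable def reducedSpan : GammaPlus ⥤ ModuleCat R := (spanT R).obj (ModuleCat.of R R)

instance (S : GammaPlus) : Finite S.nb :=
  haveI := S.property
  Subtype.finite

instance : Unique (GammaPlus.of 1).nb where
  default := ⟨some 0, Option.some_ne_none 0⟩
  uniq := fun
    | ⟨some i, _⟩ => Subtype.ext (congrArg some (Subsingleton.elim i 0))
    | ⟨none, h⟩ => absurd rfl h

def GammaPlus.ofOneHom (S : GammaPlus) (s : S.nb) : GammaPlus.of 1 ⟶ S where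
  hom :=
    { toFun := fun x => Option.casesOn x S.obj.point fun _ => s.1
      map_point := rfl }

section Finsupp

variable (A : Type*) [CommSemiring A] {ι : Type*} [Finite ι] {M N P : Type*}
  [AddCommMonoid M] [Module A M] [AddCommMonoid N] [Module A N] [AddCommMonoid P] [Module A P]

noncomputable def Finsupp.linearMapEquivOfFinite :
    ((ι →₀ M) →ₗ[A] N) ≃ (M →ₗ[A] (ι →₀ N)) where
  toFun f := (Finsupp.linearEquivFunOnFinite A N ι).symm.toLinearMap ∘ₗ
    LinearMap.pi fun i => f ∘ₗ Finsupp.lsingle i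
  invFun g := Finsupp.lsum A fun i => Finsupp.lapply i ∘ₗ g
  left_inv f := by ext; simp
  right_inv g := by ext; simp

@[simp]
lemma Finsupp.linearMapEquivOfFinite_apply_apply (f : (ι →₀ M) →ₗ[A] N) (m : M) (i : ι) :
    Finsupp.linearMapEquivOfFinite A f m i = f (Finsupp.single i m) := rfl

@[simp]
lemma Finsupp.linearMapEquivOfFinite_symm_apply_single (g : M →ₗ[A] (ι →₀ N)) (i : ι) (m : M) :
    (Finsupp.linearMapEquivOfFinite A).symm g (Finsupp.single i m) = g m i := by
  simp [Finsupp.linearMapEquivOfFinite]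

lemma Finsupp.linearMapEquivOfFinite_symm_comp (g : N →ₗ[A] (ι →₀ P)) (f : M →ₗ[A] N) :
    (Finsupp.linearMapEquivOfFinite A).symm (g ∘ₗ f) =
      (Finsupp.linearMapEquivOfFinite A).symm g ∘ₗ Finsupp.mapRange.linearMap f :=
  Finsupp.lhom_ext fun i m => by simp

lemma Finsupp.linearMapEquivOfFinite_comp (f : (ι →₀ M) →ₗ[A] N) (g : N →ₗ[A] P) :
    Finsupp.linearMapEquivOfFinite A (g ∘ₗ f) =
      Finsupp.mapRange.linearMap g ∘ₗ Finsupp.linearMapEquivOfFinite A f := by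
  ext; simp

end Finsupp

noncomputable def ModuleCat.finsuppFunctor (ι : Type) : ModuleCat R ⥤ ModuleCat R where
  obj M := ModuleCat.of R (ι →₀ M)
  map φ := ModuleCat.ofHom (Finsupp.mapRange.linearMap φ.hom)

noncomputable def ModuleCat.finsuppFunctorSelfAdjunction (ι : Type) [Finite ι] :
    ModuleCat.finsuppFunctor R ι ⊣ ModuleCat.finsuppFunctor R ι :=
  Adjunction.mkOfHomEquiv
    { homEquiv := fun _ _ =>
        { toFun := fun f => ModuleCat.ofHom (Finsupp.linearMapEquivOfFinite R f.hom)
          invFun := fun g => ModuleCat.ofHom ((Finsupp.linearMapEquivOfFinite R).symm g.hom)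
          left_inv := fun f =>
            ModuleCat.hom_ext ((Finsupp.linearMapEquivOfFinite R).symm_apply_apply f.hom)
          right_inv := fun g =>
            ModuleCat.hom_ext ((Finsupp.linearMapEquivOfFinite R).apply_symm_apply g.hom) }
      homEquiv_naturality_left_symm := fun f g =>
        ModuleCat.hom_ext (Finsupp.linearMapEquivOfFinite_symm_comp R g.hom f.hom)
      homEquiv_naturality_right := fun f g =>
        ModuleCat.hom_ext (Finsupp.linearMapEquivOfFinite_comp R f.hom g.hom) }

lemma spanT_comp_evaluation (S : GammaPlus) :
    spanT R ⋙ (evaluation GammaPlus (ModuleCat R)).obj S = ModuleCat.finsuppFunctor R S.nb :=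
  rfl

instance (ι : Type) [Finite ι] : (ModuleCat.finsuppFunctor R ι).IsLeftAdjoint :=
  (ModuleCat.finsuppFunctorSelfAdjunction R ι).isLeftAdjoint

instance (ι : Type) [Finite ι] : (ModuleCat.finsuppFunctor R ι).IsRightAdjoint :=
  (ModuleCat.finsuppFunctorSelfAdjunction R ι).isRightAdjoint

lemma spanTMapAux_single_of_eq (M : ModuleCat R) {S S' : GammaPlus} (f : S ⟶ S') {s : S.nb}
    {t : S'.nb} (h : f.hom.toFun s.1 = t.1) (m : M) :
    spanTMapAux R M f (Finsupp.single s m) = Finsupp.single t m := by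
  rw [spanTMapAux_single, dif_pos (h ▸ t.2)]
  congr

lemma spanT_map_app_single {M N : ModuleCat R} (φ : M ⟶ N) (S : GammaPlus) (s : S.nb) (m : M) :
    (((spanT R).map φ).app S).hom (Finsupp.single s m) = Finsupp.single s (φ.hom m) :=
  Finsupp.mapRange_single (hf := map_zero _)

noncomputable def spanTPreimage {M N : ModuleCat R} (η : (spanT R).obj M ⟶ (spanT R).obj N) :
    M ⟶ N :=
  ModuleCat.ofHom <| Finsupp.lapply default ∘ₗ
    ((η.app (GammaPlus.of 1)).hom : ((GammaPlus.of 1).nb →₀ M) →ₗ[R] ((GammaPlus.of 1).nb →₀ N)) ∘ₗ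
    Finsupp.lsingle default

lemma spanT_natTrans_app_single {M N : ModuleCat R} (η : (spanT R).obj M ⟶ (spanT R).obj N)
    (S : GammaPlus) (s : S.nb) (m : M) :
    (η.app S).hom (Finsupp.single s m) = Finsupp.single s ((spanTPreimage R η).hom m) := by
  set x : (GammaPlus.of 1).nb →₀ N := (η.app (GammaPlus.of 1)).hom (Finsupp.single default m)
  have hη := congr($(η.naturality (GammaPlus.ofOneHom S s)).hom (Finsupp.single default m))
  rw [← spanTMapAux_single_of_eq R M (GammaPlus.ofOneHom S s) (s := default) rfl m]
  refine hη.trans ?_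
  change spanTMapAux R N (GammaPlus.ofOneHom S s) x = _
  rw [Finsupp.unique_single x]
  exact spanTMapAux_single_of_eq R N _ rfl _

lemma spanTPreimage_map {M N : ModuleCat R} (φ : M ⟶ N) :
    spanTPreimage R ((spanT R).map φ) = φ := by
  ext m
  simp [spanTPreimage, spanT]

noncomputable def spanTFullyFaithful : (spanT R).FullyFaithful where
  preimage := spanTPreimage R
  map_preimage η := by
    ext S : 2
    refine ModuleCat.hom_ext (Finsupp.lhom_ext fun s m => ?_)
    exact (spanT_map_app_single R _ S s m).trans (spanT_natTrans_app_single R η S s m).symm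
  preimage_map := spanTPreimage_map R

/-- The functor `𝖳 : R-mod ⥤ Fun(Γ₊, R)`, `𝖳(M)(S) = ⊕_{s ∈ S∖{o}} M`, is exact
(it preserves finite limits and finite colimits) and fully faithful. -/
theorem spanT_exact_fullyFaithful (R : Type) [CommRing R] :
    Nonempty (PreservesFiniteLimits (spanT R)) ∧
    Nonempty (PreservesFiniteColimits (spanT R)) ∧
    (spanT R).Full ∧ (spanT R).Faithful := by
  refine ⟨⟨preservesFiniteLimits_of_evaluation _ fun S => ?_⟩,
    ⟨preservesFiniteColimits_of_evaluation _ fun S => ?_⟩,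
    (spanTFullyFaithful R).full, (spanTFullyFaithful R).faithful⟩
  all_goals rw [spanT_comp_evaluation]; infer_instance
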